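/- arXiv:1709.10146 — 2 statements merged into one kernel-verified Lean document; each statement's English description precedes it below -/
import Mathlib

section
/- For any finite sequence of positive reals x_1 ≤ x_2 ≤ ... ≤ x_c and any minimum-cost strategy lower bound, if a sequence (y_j) is defined greedily by y_j = min{ y : Σ_{i : φ_i ≤ y} w_i > y_1 + ... + y_{j-1} } (with values y_j taken from a finite set of potentials φ_0 < φ_1 < ... < φ_m and weights w_i ≥ 0), and the x-sequence satisfies Σ_{i : φ_i < x_j} w_i ≤ x_1 + ... + x_{j-1} for every j, then y_j ≥ x_j for every index j for which y_j is defined. -/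
/-!
Induction on `j`: if `y_1 + ⋯ + y_{j-1} ≥ x_1 + ⋯ + x_{j-1}`, then the covering constraint for
`x_j` bounds the weight strictly below `x_j` by the `y`-prefix, which is exceeded by the weight
up to `y_j`; as the weights are nonnegative, `y_j < x_j` is impossible. Once `y ≥ x` termwise,
`d > c` would give `y_1 + ⋯ + y_c ≥ x_1 + ⋯ + x_c ≥ w_0 + ⋯ + w_m`, contradicting the minimality
of `d`.
-/

open Finset

theorem le_of_sum_filter_lt_le_of_lt_sum_filter_le {ι α M : Type*} [LinearOrder α]
    [AddCommMonoid M] [PartialOrder M] [IsOrderedAddMonoid M]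
    {s : Finset ι} {w : ι → M} {φ : ι → α} (hw : ∀ i ∈ s, 0 ≤ w i) {a b : α} {S : M}
    (ha : ∑ i ∈ s.filter (fun i => φ i < a), w i ≤ S)
    (hb : S < ∑ i ∈ s.filter (fun i => φ i ≤ b), w i) :
    a ≤ b := by
  by_contra! hba
  have hsub : s.filter (fun i => φ i ≤ b) ⊆ s.filter (fun i => φ i < a) :=
    monotone_filter_right s fun _ _ hi => hi.trans_lt hba
  have := sum_le_sum_of_subset_of_nonneg hsub fun i hi _ => hw i (mem_filter.mp hi).1
  exact (hb.trans_le (this.trans ha)).false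

theorem le_of_forall_le_of_sum_Ico_le {M : Type*} [AddCommMonoid M] [PartialOrder M]
    [IsOrderedAddMonoid M] {x y : ℕ → M} {n : ℕ}
    (step : ∀ j, 1 ≤ j → j ≤ n → ∑ k ∈ Ico 1 j, x k ≤ ∑ k ∈ Ico 1 j, y k → x j ≤ y j) :
    ∀ j, 1 ≤ j → j ≤ n → x j ≤ y j := by
  intro j
  induction j using Nat.strong_induction_on with
  | _ j ih =>
    intro hj1 hjn
    refine step j hj1 hjn (sum_le_sum fun k hk => ?_)
    obtain ⟨hk1, hkj⟩ := mem_Ico.mp hk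
    exact ih k hkj hk1 (by omega)

theorem stmt1_general (m c d : ℕ) (w φp x y : ℕ → ℝ)
    (hw : ∀ i ≤ m, 0 ≤ w i)
    -- covering constraint for j = 1, …, c
    (hcov : ∀ j, 1 ≤ j → j ≤ c →
      ∑ i ∈ (Finset.range (m + 1)).filter (fun i => φp i < x j), w i
        ≤ ∑ j' ∈ Finset.Ico 1 j, x j')
    -- covering constraint for j = c + 1 (with x_{c+1} = +∞)
    (hcovtop : ∑ i ∈ Finset.range (m + 1), w i ≤ ∑ j' ∈ Finset.Ico 1 (c + 1), x j')
    -- y j violates the constraint given y_1, …, y_{j-1}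
    (hyviol : ∀ j, 1 ≤ j → j ≤ d →
      ∑ i ∈ (Finset.range (m + 1)).filter (fun i => φp i ≤ y j), w i
        > ∑ j' ∈ Finset.Ico 1 j, y j')
    (hdmin : ∀ d', d' < d → ∑ j' ∈ Finset.Ico 1 (d' + 1), y j' < ∑ i ∈ Finset.range (m + 1), w i) :
    d ≤ c ∧ ∀ j, 1 ≤ j → j ≤ d → x j ≤ y j := by
  have hw' : ∀ i ∈ range (m + 1), 0 ≤ w i := fun i hi =>
    hw i (Nat.lt_succ_iff.mp (mem_range.mp hi))
  have hxy : ∀ j, 1 ≤ j → j ≤ min d c → x j ≤ y j :=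
    le_of_forall_le_of_sum_Ico_le fun j hj1 hjn hprefix =>
      le_of_sum_filter_lt_le_of_lt_sum_filter_le hw'
        ((hcov j hj1 (le_of_le_min_right hjn)).trans hprefix)
        (hyviol j hj1 (le_of_le_min_left hjn))
  have hdc : d ≤ c := by
    by_contra! hcd
    have hprefix : ∑ k ∈ Ico 1 (c + 1), x k ≤ ∑ k ∈ Ico 1 (c + 1), y k :=
      sum_le_sum fun k hk => by
        obtain ⟨hk1, hkc⟩ := mem_Ico.mp hk
        exact hxy k hk1 (le_min (by omega) (by omega))
    exact (hcovtop.trans hprefix).not_gt (hdmin c hcd)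
  exact ⟨hdc, fun j hj1 hjd => hxy j hj1 (le_min hjd (hjd.trans hdc))⟩

/-- Lemma `y-min`: given weights `w_0,…,w_m ≥ 0` and strictly increasing potentials
`φ_0 < … < φ_m`, if a nondecreasing sequence `x_1 ≤ … ≤ x_c` with `x_1 = φ_0`
satisfies the covering constraints, and `y_1, y_2, …` is the greedy sequence
(`y_j` is the least potential whose accumulated weight exceeds `y_1+⋯+y_{j-1}`)
with `d` the least index such that `y_1+⋯+y_d ≥ w_0+⋯+w_m`, then `d ≤ c` and
`y_j ≥ x_j` for every `j ≤ d`. -/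
theorem stmt1 (m c d : ℕ) (w φp x y : ℕ → ℝ)
    (hc : 1 ≤ c) (hd : 1 ≤ d)
    (hw : ∀ i ≤ m, 0 ≤ w i)
    (hφ : ∀ i, i < m → φp i < φp (i + 1))
    (hx1 : x 1 = φp 0)
    (hxmono : ∀ j, 1 ≤ j → j < c → x j ≤ x (j + 1))
    -- covering constraint for j = 1, …, c
    (hcov : ∀ j, 1 ≤ j → j ≤ c →
      ∑ i ∈ (Finset.range (m + 1)).filter (fun i => φp i < x j), w i
        ≤ ∑ j' ∈ Finset.Ico 1 j, x j')
    -- covering constraint for j = c + 1 (with x_{c+1} = +∞)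
    (hcovtop : ∑ i ∈ Finset.range (m + 1), w i ≤ ∑ j' ∈ Finset.Ico 1 (c + 1), x j')
    -- y j is a potential
    (hymem : ∀ j, 1 ≤ j → j ≤ d → ∃ i ≤ m, y j = φp i)
    -- y j violates the constraint given y_1, …, y_{j-1}
    (hyviol : ∀ j, 1 ≤ j → j ≤ d →
      ∑ i ∈ (Finset.range (m + 1)).filter (fun i => φp i ≤ y j), w i
        > ∑ j' ∈ Finset.Ico 1 j, y j')
    -- y j is the least such potential
    (hymin : ∀ j, 1 ≤ j → j ≤ d → ∀ i ≤ m,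
      (∑ i' ∈ (Finset.range (m + 1)).filter (fun i' => φp i' ≤ φp i), w i'
        > ∑ j' ∈ Finset.Ico 1 j, y j') → y j ≤ φp i)
    -- d is the least index with y_1 + ⋯ + y_d ≥ w_0 + ⋯ + w_m
    (hdge : ∑ j' ∈ Finset.Ico 1 (d + 1), y j' ≥ ∑ i ∈ Finset.range (m + 1), w i)
    (hdmin : ∀ d', d' < d → ∑ j' ∈ Finset.Ico 1 (d' + 1), y j' < ∑ i ∈ Finset.range (m + 1), w i) :
    d ≤ c ∧ ∀ j, 1 ≤ j → j ≤ d → x j ≤ y j :=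
  stmt1_general m c d w φp x y hw hcov hcovtop hyviol hdmin
end

section
/- Given real numbers satisfying: D_flat ≤ 4P + P·D_deep/φ, D_deep ≤ 10·O_deep − 16·φ, and O_flat ≥ (P/φ)·O_deep, with P ≥ 0, φ > 0, O_deep ≥ 0, then D_deep + D_flat ≤ 10·O_deep + 10·O_flat − 12P − 16φ. -/
theorem stmt3_general (P φ Odeep Oflat Ddeep Dflat : ℝ)
    (hP : 0 ≤ P) (hφ : 0 < φ)
    (h1 : Dflat ≤ 4 * P + P * Ddeep / φ)
    (h2 : Ddeep ≤ 10 * Odeep - 16 * φ)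
    (h3 : Oflat ≥ (P / φ) * Odeep) :
    Ddeep + Dflat ≤ 10 * Odeep + 10 * Oflat - 12 * P - 16 * φ := by
  rw [mul_div_right_comm] at h1
  calc Ddeep + Dflat ≤ (1 + P / φ) * Ddeep + 4 * P := by linarith
    _ ≤ (1 + P / φ) * (10 * Odeep - 16 * φ) + 4 * P := by gcongr
    _ = 10 * Odeep + 10 * (P / φ * Odeep) - 12 * P - 16 * φ := by field_simp; ring
    _ ≤ 10 * Odeep + 10 * Oflat - 12 * P - 16 * φ := by linarith

theorem stmt3 (P φ Odeep Oflat Ddeep Dflat : ℝ)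
    (hP : 0 ≤ P) (hφ : 0 < φ) (hOdeep : 0 ≤ Odeep)
    (h1 : Dflat ≤ 4 * P + P * Ddeep / φ)
    (h2 : Ddeep ≤ 10 * Odeep - 16 * φ)
    (h3 : Oflat ≥ (P / φ) * Odeep) :
    Ddeep + Dflat ≤ 10 * Odeep + 10 * Oflat - 12 * P - 16 * φ :=
  stmt3_general P φ Odeep Oflat Ddeep Dflat hP hφ h1 h2 h3
end
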